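/- arXiv:2410.10292 — 2 statements merged into one kernel-verified Lean document; each statement's English description precedes it below -/
import Mathlib

section
/- Let A ∈ R and suppose that for every a ∈ ℝ^d there exists u₁ > 0 such that (u+u₁)A ⊆ uA + a ⊆ (u−u₁)A for all u > u₁ (the translation-sandwich property). Let X be a random vector with Y_A := sup{u > 0 : X ∈ uA} and P[X ∈ xA] = P[Y_A > x], and assume the distribution of Y_A is long-tailed. Then for every a ∈ ℝ^d, lim_{x→∞} P[X ∈ xA + a] / P[X ∈ xA] = 1. -/
/-! The sandwich gives `P (x + u₁) ≤ P[X ∈ xA + a] ≤ P (x - u₁)` for large `x`, and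
long-tailedness makes both bounds asymptotic to `P x`. -/

open Filter Topology MeasureTheory

theorem tendsto_div_add_of_tendsto_div_sub {f : ℝ → ℝ} {u : ℝ}
    (h : Tendsto (fun x => f (x - u) / f x) atTop (𝓝 1)) :
    Tendsto (fun x => f (x + u) / f x) atTop (𝓝 1) := by
  have h' : Tendsto (fun x => f x / f (x + u)) atTop (𝓝 1) := by
    simpa [Function.comp_def] using h.comp (tendsto_atTop_add_const_right atTop u tendsto_id)
  simpa using h'.inv₀ one_ne_zero

theorem tendsto_div_of_le_shift_of_shift_le {f g : ℝ → ℝ} {u : ℝ}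
    (hf : ∀ᶠ x in atTop, 0 ≤ f x)
    (hlong : Tendsto (fun x => f (x - u) / f x) atTop (𝓝 1))
    (hlow : ∀ᶠ x in atTop, f (x + u) ≤ g x) (hup : ∀ᶠ x in atTop, g x ≤ f (x - u)) :
    Tendsto (fun x => g x / f x) atTop (𝓝 1) := by
  refine tendsto_of_tendsto_of_tendsto_of_le_of_le'
    (tendsto_div_add_of_tendsto_div_sub hlong) hlong ?_ ?_
  · filter_upwards [hf, hlow] with x hfx hx using div_le_div_of_nonneg_right hx hfx
  · filter_upwards [hf, hup] with x hfx hx using div_le_div_of_nonneg_right hx hfx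

theorem stmt_11_general {Ω : Type*} [MeasurableSpace Ω] (μ : Measure Ω)
    [IsProbabilityMeasure μ] {d : ℕ}
    (A : Set (Fin d → ℝ)) (X : Ω → Fin d → ℝ)
    (hsand : ∀ a : Fin d → ℝ, ∃ u₁ : ℝ, 0 < u₁ ∧ ∀ u : ℝ, u₁ < u →
      (fun y => (u + u₁) • y) '' A ⊆ (fun y => u • y + a) '' A ∧
      (fun y => u • y + a) '' A ⊆ (fun y => (u - u₁) • y) '' A)
    (P : ℝ → ℝ)
    (hP : ∀ x : ℝ, P x = (μ {ω | X ω ∈ (fun y => x • y) '' A}).toReal)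
    (hpos : ∀ x, 0 < P x)
    (hlong : ∀ u : ℝ, 0 < u →
      Tendsto (fun x => P (x - u) / P x) atTop (nhds 1)) :
    ∀ a : Fin d → ℝ,
      Tendsto (fun x =>
          (μ {ω | X ω ∈ (fun y => x • y + a) '' A}).toReal / P x)
        atTop (nhds 1) := by
  intro a
  obtain ⟨u₁, hu₁, hs⟩ := hsand a
  refine tendsto_div_of_le_shift_of_shift_le (.of_forall fun x => (hpos x).le)
    (hlong u₁ hu₁) ?_ ?_
  · filter_upwards [eventually_gt_atTop u₁] with x hx
    rw [hP]
    exact measureReal_mono fun ω hω => (hs x hx).1 hω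
  · filter_upwards [eventually_gt_atTop u₁] with x hx
    rw [hP]
    exact measureReal_mono fun ω hω => (hs x hx).2 hω

/-- If the translation-sandwich property holds for `A` and the distribution of
`Y_A` is long-tailed, then `P[X ∈ xA + a] ∼ P[X ∈ xA]` for every `a`. -/
theorem stmt_11 {Ω : Type*} [MeasurableSpace Ω] (μ : Measure Ω)
    [IsProbabilityMeasure μ] {d : ℕ}
    (A : Set (Fin d → ℝ)) (X : Ω → Fin d → ℝ)
    (hopen : IsOpen A)
    (hinc : ∀ y ∈ A, ∀ a : Fin d → ℝ, (∀ i, 0 ≤ a i) → y + a ∈ A)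
    (hconv : Convex ℝ Aᶜ)
    (h0 : (0 : Fin d → ℝ) ∉ closure A)
    (hsand : ∀ a : Fin d → ℝ, ∃ u₁ : ℝ, 0 < u₁ ∧ ∀ u : ℝ, u₁ < u →
      (fun y => (u + u₁) • y) '' A ⊆ (fun y => u • y + a) '' A ∧
      (fun y => u • y + a) '' A ⊆ (fun y => (u - u₁) • y) '' A)
    (P : ℝ → ℝ)
    (hP : ∀ x : ℝ, P x = (μ {ω | X ω ∈ (fun y => x • y) '' A}).toReal)
    (hpos : ∀ x, 0 < P x)
    (hlong : ∀ u : ℝ, 0 < u →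
      Tendsto (fun x => P (x - u) / P x) atTop (nhds 1)) :
    ∀ a : Fin d → ℝ,
      Tendsto (fun x =>
          (μ {ω | X ω ∈ (fun y => x • y + a) '' A}).toReal / P x)
        atTop (nhds 1) :=
  stmt_11_general μ A X hsand P hP hpos hlong
end

section
/- Let Y₁, Y₂ be independent nonnegative random variables with dominatedly varying distributions F₁, F₂. Then P[Y₁ + Y₂ > x] ≍ F̄₁(x) + F̄₂(x) as x → ∞, i.e. there exist 0 < c ≤ C < ∞ with c(F̄₁(x)+F̄₂(x)) ≤ P[Y₁+Y₂ > x] ≤ C(F̄₁(x)+F̄₂(x)) for all large x; moreover the distribution of Y₁ + Y₂ is dominatedly varying. -/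
/-!
If `Y₁ + Y₂ > x` then one of the summands exceeds `x / 2`, so the tail of the sum at `b x` is at
most `F̄₁(b x / 2) + F̄₂(b x / 2)`, which dominated variation bounds by a multiple of
`F̄₁(x) + F̄₂(x)`. Conversely, by nonnegativity each `F̄ᵢ(x)` is at most the tail of the sum at `x`.
Taking `b = 1` gives the two-sided estimate, and `b < 1` the dominated variation of the sum.
-/

open Filter Topology MeasureTheory ProbabilityTheory

def DominatedlyVarying (f : ℝ → ℝ) : Prop :=
  ∀ b : ℝ, 0 < b → b < 1 → ∃ C : ℝ, ∀ᶠ x in atTop, f (b * x) / f x ≤ C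

namespace DominatedlyVarying

variable {f : ℝ → ℝ}

lemma exists_nonneg_eventually_le_mul (hf : DominatedlyVarying f) (hpos : ∀ x, 0 < f x)
    {b : ℝ} (hb0 : 0 < b) (hb1 : b < 1) :
    ∃ C : ℝ, 0 ≤ C ∧ ∀ᶠ x in atTop, f (b * x) ≤ C * f x := by
  obtain ⟨C, hC⟩ := hf b hb0 hb1
  refine ⟨max C 0, le_max_right _ _, ?_⟩
  filter_upwards [hC] with x hx
  calc f (b * x) ≤ C * f x := (div_le_iff₀ (hpos x)).mp hx
    _ ≤ max C 0 * f x := mul_le_mul_of_nonneg_right (le_max_left _ _) (hpos x).le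

lemma of_eventually_le_mul (hpos : ∀ x, 0 < f x)
    (h : ∀ b : ℝ, 0 < b → b < 1 → ∃ C : ℝ, ∀ᶠ x in atTop, f (b * x) ≤ C * f x) :
    DominatedlyVarying f := by
  intro b hb0 hb1
  obtain ⟨C, hC⟩ := h b hb0 hb1
  exact ⟨C, hC.mono fun x hx => (div_le_iff₀ (hpos x)).mpr hx⟩

end DominatedlyVarying

def tailProb {Ω : Type*} [MeasurableSpace Ω] (μ : Measure Ω) (X : Ω → ℝ) (x : ℝ) : ℝ :=
  (μ {ω | X ω > x}).toReal

section Tail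

variable {Ω : Type*} [MeasurableSpace Ω] {μ : Measure Ω} [IsFiniteMeasure μ] {X Y : Ω → ℝ}

lemma tailProb_le_tailProb_add (hY : ∀ ω, 0 ≤ Y ω) (x : ℝ) :
    tailProb μ X x ≤ tailProb μ (X + Y) x := by
  refine ENNReal.toReal_mono (measure_ne_top _ _) (measure_mono fun ω hω => ?_)
  simp only [Set.mem_ofPred_eq, Pi.add_apply] at hω ⊢
  linarith [hY ω]

lemma tailProb_add_le {x y z : ℝ} (h : y + z ≤ x) :
    tailProb μ (X + Y) x ≤ tailProb μ X y + tailProb μ Y z := by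
  have hsub : {ω | (X + Y) ω > x} ⊆ {ω | X ω > y} ∪ {ω | Y ω > z} := by
    intro ω hω
    by_contra hω'
    simp only [Set.mem_ofPred_eq, Set.mem_union, Pi.add_apply, not_or, not_lt] at hω hω'
    linarith [hω'.1, hω'.2]
  rw [tailProb, tailProb, tailProb, ← ENNReal.toReal_add (measure_ne_top _ _) (measure_ne_top _ _)]
  exact ENNReal.toReal_mono (by finiteness) ((measure_mono hsub).trans (measure_union_le _ _))

lemma tailProb_add_tailProb_le_two_mul (hX : ∀ ω, 0 ≤ X ω) (hY : ∀ ω, 0 ≤ Y ω) (x : ℝ) :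
    tailProb μ X x + tailProb μ Y x ≤ 2 * tailProb μ (X + Y) x := by
  have hX' := tailProb_le_tailProb_add (μ := μ) (X := Y) hX x
  rw [add_comm Y X] at hX'
  linarith [tailProb_le_tailProb_add (μ := μ) (X := X) hY x]

lemma exists_eventually_tailProb_add_le (hX : DominatedlyVarying (tailProb μ X))
    (hY : DominatedlyVarying (tailProb μ Y)) (hXpos : ∀ x, 0 < tailProb μ X x)
    (hYpos : ∀ x, 0 < tailProb μ Y x) {b : ℝ} (hb0 : 0 < b) (hb1 : b ≤ 1) :
    ∃ C : ℝ, 0 ≤ C ∧ ∀ᶠ x in atTop,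
      tailProb μ (X + Y) (b * x) ≤ C * (tailProb μ X x + tailProb μ Y x) := by
  obtain ⟨C₁, hC₁, hX'⟩ := hX.exists_nonneg_eventually_le_mul hXpos (b := b / 2) (by linarith)
    (by linarith)
  obtain ⟨C₂, hC₂, hY'⟩ := hY.exists_nonneg_eventually_le_mul hYpos (b := b / 2) (by linarith)
    (by linarith)
  refine ⟨C₁ + C₂, by positivity, ?_⟩
  filter_upwards [hX', hY'] with x hx hy
  have hsplit : tailProb μ (X + Y) (b * x) ≤ tailProb μ X (b / 2 * x) + tailProb μ Y (b / 2 * x) :=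
    tailProb_add_le (by linarith)
  nlinarith [hXpos x, hYpos x]

end Tail

theorem stmt_13_general {Ω : Type*} [MeasurableSpace Ω] (μ : Measure Ω)
    [IsProbabilityMeasure μ]
    (Y1 Y2 : Ω → ℝ) (hY1 : ∀ ω, 0 ≤ Y1 ω) (hY2 : ∀ ω, 0 ≤ Y2 ω)
    (hpos1 : ∀ x : ℝ, 0 < (μ {ω | Y1 ω > x}).toReal)
    (hpos2 : ∀ x : ℝ, 0 < (μ {ω | Y2 ω > x}).toReal)
    (hD1 : ∀ b : ℝ, 0 < b → b < 1 → ∃ C : ℝ, ∀ᶠ x in atTop,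
      (μ {ω | Y1 ω > b * x}).toReal / (μ {ω | Y1 ω > x}).toReal ≤ C)
    (hD2 : ∀ b : ℝ, 0 < b → b < 1 → ∃ C : ℝ, ∀ᶠ x in atTop,
      (μ {ω | Y2 ω > b * x}).toReal / (μ {ω | Y2 ω > x}).toReal ≤ C) :
    (∃ c C : ℝ, 0 < c ∧ c ≤ C ∧ ∀ᶠ x in atTop,
      c * ((μ {ω | Y1 ω > x}).toReal + (μ {ω | Y2 ω > x}).toReal)
        ≤ (μ {ω | Y1 ω + Y2 ω > x}).toReal ∧
      (μ {ω | Y1 ω + Y2 ω > x}).toReal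
        ≤ C * ((μ {ω | Y1 ω > x}).toReal + (μ {ω | Y2 ω > x}).toReal)) ∧
    (∀ b : ℝ, 0 < b → b < 1 → ∃ C : ℝ, ∀ᶠ x in atTop,
      (μ {ω | Y1 ω + Y2 ω > b * x}).toReal / (μ {ω | Y1 ω + Y2 ω > x}).toReal ≤ C) := by
  have hlower := tailProb_add_tailProb_le_two_mul (μ := μ) hY1 hY2
  have hsum_pos (x : ℝ) : 0 < tailProb μ (Y1 + Y2) x :=
    (hpos1 x).trans_le (tailProb_le_tailProb_add hY2 x)
  refine ⟨?_, DominatedlyVarying.of_eventually_le_mul hsum_pos fun b hb0 hb1 => ?_⟩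
  · obtain ⟨C, -, hC⟩ := exists_eventually_tailProb_add_le hD1 hD2 hpos1 hpos2 one_pos le_rfl
    refine ⟨1 / 2, max C (1 / 2), by norm_num, le_max_right _ _, ?_⟩
    filter_upwards [hC] with x hx
    rw [one_mul] at hx
    have hhalf : 1 / 2 * (tailProb μ Y1 x + tailProb μ Y2 x) ≤ tailProb μ (Y1 + Y2) x := by
      linarith [hlower x]
    exact ⟨hhalf, hx.trans <|
      mul_le_mul_of_nonneg_right (le_max_left _ _) (add_pos (hpos1 x) (hpos2 x)).le⟩
  · obtain ⟨C, hC0, hC⟩ := exists_eventually_tailProb_add_le hD1 hD2 hpos1 hpos2 hb0 hb1.le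
    refine ⟨C * 2, hC.mono fun x hx => hx.trans ?_⟩
    rw [mul_assoc]
    exact mul_le_mul_of_nonneg_left (hlower x) hC0

/-- For independent nonnegative `Y₁, Y₂` with dominatedly varying tails,
`P[Y₁+Y₂ > x] ≍ F̄₁(x)+F̄₂(x)` and the sum is dominatedly varying. -/
theorem stmt_13 {Ω : Type*} [MeasurableSpace Ω] (μ : Measure Ω)
    [IsProbabilityMeasure μ]
    (Y1 Y2 : Ω → ℝ) (hY1 : ∀ ω, 0 ≤ Y1 ω) (hY2 : ∀ ω, 0 ≤ Y2 ω)
    (hmeas1 : Measurable Y1) (hmeas2 : Measurable Y2)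
    (hind : IndepFun Y1 Y2 μ)
    (hpos1 : ∀ x : ℝ, 0 < (μ {ω | Y1 ω > x}).toReal)
    (hpos2 : ∀ x : ℝ, 0 < (μ {ω | Y2 ω > x}).toReal)
    (hD1 : ∀ b : ℝ, 0 < b → b < 1 → ∃ C : ℝ, ∀ᶠ x in atTop,
      (μ {ω | Y1 ω > b * x}).toReal / (μ {ω | Y1 ω > x}).toReal ≤ C)
    (hD2 : ∀ b : ℝ, 0 < b → b < 1 → ∃ C : ℝ, ∀ᶠ x in atTop,
      (μ {ω | Y2 ω > b * x}).toReal / (μ {ω | Y2 ω > x}).toReal ≤ C) :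
    (∃ c C : ℝ, 0 < c ∧ c ≤ C ∧ ∀ᶠ x in atTop,
      c * ((μ {ω | Y1 ω > x}).toReal + (μ {ω | Y2 ω > x}).toReal)
        ≤ (μ {ω | Y1 ω + Y2 ω > x}).toReal ∧
      (μ {ω | Y1 ω + Y2 ω > x}).toReal
        ≤ C * ((μ {ω | Y1 ω > x}).toReal + (μ {ω | Y2 ω > x}).toReal)) ∧
    (∀ b : ℝ, 0 < b → b < 1 → ∃ C : ℝ, ∀ᶠ x in atTop,
      (μ {ω | Y1 ω + Y2 ω > b * x}).toReal / (μ {ω | Y1 ω + Y2 ω > x}).toReal ≤ C) :=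
  stmt_13_general μ Y1 Y2 hY1 hY2 hpos1 hpos2 hD1 hD2
end
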